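/- Let a, b ∈ (1/4, 1/2) satisfy a + 2b > 1. Then sup over (ξ₁,τ₁) ∈ ℝ² with |ξ₁| ≥ 1 of ⟨τ₁−ξ₁³⟩^{−b} ( ∫_{D(ξ₁,τ₁)} ⟨τ−τ₁+(ξ−ξ₁)²⟩^{−2b} ⟨τ+ξ²⟩^{−2a} dξ dτ )^{1/2} is finite, where D(ξ₁,τ₁) = {(ξ,τ) ∈ ℝ² : ⟨τ₁−ξ₁³⟩ ≥ ⟨τ+ξ²⟩ and ⟨τ₁−ξ₁³⟩ ≥ ⟨τ−τ₁+(ξ−ξ₁)²⟩}. -/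

import Mathlib

/-!
Write `M = ⟨τ₁ - ξ₁³⟩`, `u = τ + ξ²` and `v = τ - τ₁ + (ξ - ξ₁)²`. The difference
`u - v = τ₁ - ξ₁² + 2ξ₁ξ` does not involve `τ` and has slope `|2ξ₁| ≥ 1` in `ξ`. Since
`⟨u - v⟩ ≤ 2 max(⟨u⟩, ⟨v⟩)` and `⟨u⟩, ⟨v⟩ ≤ M` on `D`, for any `r ≥ 2a, 2b` the integrand is at most
`2^r M^(2r-2a-2b) ⟨u - v⟩^(-r) (⟨u⟩^(-r) + ⟨v⟩^(-r))`. For `r > 1`, integrating first in `τ`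
and then in `ξ` bounds the integral by `O(M^(2r-2a-2b))`, and `r = (1 + a + 2b)/2 ≤ a + 2b` makes
`M^(-b)` absorb its square root.
-/

open MeasureTheory Real Set

noncomputable section

/-- Japanese bracket `⟨c⟩ = 1 + |c|`. -/
def jb (c : ℝ) : ℝ := 1 + |c|

lemma one_le_jb (x : ℝ) : 1 ≤ jb x := le_add_of_nonneg_right (abs_nonneg x)

lemma jb_pos (x : ℝ) : 0 < jb x := one_pos.trans_le (one_le_jb x)

lemma jb_rpow_nonneg (x r : ℝ) : 0 ≤ jb x ^ r := rpow_nonneg (jb_pos x).le r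

lemma jb_sub_comm (u v : ℝ) : jb (u - v) = jb (v - u) := by rw [jb, jb, abs_sub_comm]

lemma jb_sub_le_add (u v : ℝ) : jb (u - v) ≤ jb u + jb v := by
  unfold jb; linarith [abs_sub u v]

lemma rpow_neg_le_rpow_sub_mul_rpow_neg {y N p r : ℝ} (hy : 0 < y) (hyN : y ≤ N) (hpr : p ≤ r) :
    y ^ (-p) ≤ N ^ (r - p) * y ^ (-r) := calc
  y ^ (-p) = y ^ (r - p) * y ^ (-r) := by rw [← rpow_add hy]; ring_nf
  _ ≤ N ^ (r - p) * y ^ (-r) := by gcongr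

lemma jb_rpow_neg_mul_le_of_le {u v M p q r : ℝ} (hp : 0 ≤ p) (hpr : p ≤ r) (hqr : q ≤ r)
    (huv : jb u ≤ jb v) (hv : jb v ≤ M) :
    jb v ^ (-p) * jb u ^ (-q) ≤
      2 ^ r * M ^ (2 * r - p - q) * (jb (u - v) ^ (-r) * jb u ^ (-r)) := by
  have hM : 0 < M := (jb_pos v).trans_le hv
  have hw : jb (u - v) / 2 ≤ jb v := by linarith [jb_sub_le_add u v]
  have hw_pos : 0 < jb (u - v) / 2 := by linarith [jb_pos (u - v)]
  have hv_le : jb v ^ (-p) ≤ 2 ^ r * M ^ (r - p) * jb (u - v) ^ (-r) := calc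
    jb v ^ (-p) ≤ (jb (u - v) / 2) ^ (-p) := rpow_le_rpow_of_nonpos hw_pos hw (by linarith)
    _ ≤ M ^ (r - p) * (jb (u - v) / 2) ^ (-r) :=
      rpow_neg_le_rpow_sub_mul_rpow_neg hw_pos (hw.trans hv) hpr
    _ = 2 ^ r * M ^ (r - p) * jb (u - v) ^ (-r) := by
      rw [div_rpow (jb_pos _).le zero_le_two, rpow_neg zero_le_two, rpow_neg (jb_pos _).le]
      field_simp
  have hu_le : jb u ^ (-q) ≤ M ^ (r - q) * jb u ^ (-r) :=
    rpow_neg_le_rpow_sub_mul_rpow_neg (jb_pos u) (huv.trans hv) hqr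
  calc jb v ^ (-p) * jb u ^ (-q)
      ≤ (2 ^ r * M ^ (r - p) * jb (u - v) ^ (-r)) * (M ^ (r - q) * jb u ^ (-r)) :=
        mul_le_mul hv_le hu_le (jb_rpow_nonneg _ _) ((jb_rpow_nonneg _ _).trans hv_le)
    _ = 2 ^ r * M ^ (2 * r - p - q) * (jb (u - v) ^ (-r) * jb u ^ (-r)) := by
        rw [show 2 * r - p - q = (r - p) + (r - q) by ring, rpow_add hM]; ring

lemma jb_rpow_neg_mul_le {u v M p q r : ℝ} (hp : 0 ≤ p) (hq : 0 ≤ q) (hpr : p ≤ r) (hqr : q ≤ r)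
    (hu : jb u ≤ M) (hv : jb v ≤ M) :
    jb v ^ (-p) * jb u ^ (-q) ≤
      2 ^ r * M ^ (2 * r - p - q) * (jb (u - v) ^ (-r) * (jb u ^ (-r) + jb v ^ (-r))) := by
  have hw : 0 ≤ 2 ^ r * M ^ (2 * r - p - q) * jb (u - v) ^ (-r) := by
    have := (jb_pos u).trans_le hu
    have := jb_pos (u - v)
    positivity
  rcases le_total (jb u) (jb v) with huv | hvu
  · calc jb v ^ (-p) * jb u ^ (-q)
        ≤ 2 ^ r * M ^ (2 * r - p - q) * (jb (u - v) ^ (-r) * jb u ^ (-r)) :=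
          jb_rpow_neg_mul_le_of_le hp hpr hqr huv hv
      _ ≤ _ := by
          rw [← mul_assoc, ← mul_assoc]
          gcongr
          exact le_add_of_nonneg_right (jb_rpow_nonneg _ _)
  · calc jb v ^ (-p) * jb u ^ (-q) = jb u ^ (-q) * jb v ^ (-p) := mul_comm _ _
      _ ≤ 2 ^ r * M ^ (2 * r - q - p) * (jb (v - u) ^ (-r) * jb v ^ (-r)) :=
          jb_rpow_neg_mul_le_of_le hq hqr hpr hvu hu
      _ ≤ _ := by
          rw [jb_sub_comm v u, show 2 * r - q - p = 2 * r - p - q by ring, ← mul_assoc, ← mul_assoc]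
          gcongr
          exact le_add_of_nonneg_left (jb_rpow_nonneg _ _)

@[fun_prop]
lemma continuous_jb : Continuous jb := by unfold jb; fun_prop

lemma lintegral_jb_rpow_neg_lt_top {r : ℝ} (hr : 1 < r) :
    ∫⁻ x, ENNReal.ofReal (jb x ^ (-r)) < ⊤ := by
  simpa [jb, Real.norm_eq_abs] using
    finite_integral_one_add_norm (E := ℝ) (μ := volume) (r := r) (by simpa using hr)

lemma lintegral_jb_rpow_neg_affine_le {r : ℝ} (c : ℝ) {d : ℝ} (hr : 0 ≤ r) (hd : 1 ≤ |d|) :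
    ∫⁻ t, ENNReal.ofReal (jb (c + d * t) ^ (-r)) ≤ ∫⁻ x, ENNReal.ofReal (jb x ^ (-r)) := by
  have hd0 : d ≠ 0 := by rintro rfl; norm_num at hd
  calc ∫⁻ t, ENNReal.ofReal (jb (c + d * t) ^ (-r))
      ≤ ∫⁻ t, ENNReal.ofReal (jb (t + c / d) ^ (-r)) := by
        refine lintegral_mono fun t => ENNReal.ofReal_le_ofReal ?_
        refine rpow_le_rpow_of_nonpos (jb_pos _) ?_ (neg_nonpos.mpr hr)
        have : c + d * t = d * (t + c / d) := by field_simp; ring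
        rw [jb, jb, this, abs_mul]
        nlinarith [abs_nonneg (t + c / d)]
    _ = ∫⁻ x, ENNReal.ofReal (jb x ^ (-r)) :=
        lintegral_add_right_eq_self (fun x => ENNReal.ofReal (jb x ^ (-r))) (c / d)

lemma lintegral_jb_rpow_neg_mul_shear_le {r : ℝ} (c : ℝ) {d : ℝ} {β : ℝ → ℝ} (hβ : Measurable β)
    (hr : 0 ≤ r) (hd : 1 ≤ |d|) :
    ∫⁻ z : ℝ × ℝ,
        ENNReal.ofReal (jb (c + d * z.1) ^ (-r)) * ENNReal.ofReal (jb (z.2 + β z.1) ^ (-r))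
      ≤ (∫⁻ x, ENNReal.ofReal (jb x ^ (-r))) ^ 2 := by
  set C := ∫⁻ x, ENNReal.ofReal (jb x ^ (-r))
  have hinner (ξ : ℝ) : ∫⁻ τ, ENNReal.ofReal (jb (τ + β ξ) ^ (-r)) = C :=
    lintegral_add_right_eq_self (fun x => ENNReal.ofReal (jb x ^ (-r))) (β ξ)
  rw [Measure.volume_eq_prod, lintegral_prod _ (by fun_prop)]
  calc ∫⁻ ξ, ∫⁻ τ, ENNReal.ofReal (jb (c + d * ξ) ^ (-r)) * ENNReal.ofReal (jb (τ + β ξ) ^ (-r))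
      = ∫⁻ ξ, ENNReal.ofReal (jb (c + d * ξ) ^ (-r)) * C := by
        refine lintegral_congr fun ξ => ?_
        rw [lintegral_const_mul _ (by fun_prop), hinner]
    _ = (∫⁻ ξ, ENNReal.ofReal (jb (c + d * ξ) ^ (-r))) * C := lintegral_mul_const _ (by fun_prop)
    _ ≤ C ^ 2 := by rw [sq]; gcongr; exact lintegral_jb_rpow_neg_affine_le c hr hd

lemma lintegral_jb_rpow_neg_mul_add_le {r : ℝ} (c : ℝ) {d : ℝ} {β γ : ℝ → ℝ} (hβ : Measurable β)
    (hγ : Measurable γ) (hr : 0 ≤ r) (hd : 1 ≤ |d|) :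
    ∫⁻ z : ℝ × ℝ, ENNReal.ofReal (jb (c + d * z.1) ^ (-r) *
        (jb (z.2 + β z.1) ^ (-r) + jb (z.2 + γ z.1) ^ (-r)))
      ≤ 2 * (∫⁻ x, ENNReal.ofReal (jb x ^ (-r))) ^ 2 := by
  simp_rw [mul_add, ENNReal.ofReal_add (mul_nonneg (jb_rpow_nonneg _ _) (jb_rpow_nonneg _ _))
    (mul_nonneg (jb_rpow_nonneg _ _) (jb_rpow_nonneg _ _)), ENNReal.ofReal_mul (jb_rpow_nonneg _ _)]
  rw [lintegral_add_left (by fun_prop), two_mul]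
  exact add_le_add (lintegral_jb_rpow_neg_mul_shear_le c hβ hr hd)
    (lintegral_jb_rpow_neg_mul_shear_le c hγ hr hd)

lemma setIntegral_jb_rpow_neg_mul_le {p q r M c d : ℝ} {u v : ℝ × ℝ → ℝ} {β γ : ℝ → ℝ}
    (hu : ∀ z, u z = z.2 + β z.1) (hv : ∀ z, v z = z.2 + γ z.1) (hβ : Measurable β)
    (hγ : Measurable γ) (hβγ : ∀ ξ, β ξ - γ ξ = c + d * ξ) (hd : 1 ≤ |d|)
    (hp : 0 ≤ p) (hq : 0 ≤ q) (hpr : p ≤ r) (hqr : q ≤ r) (hr : 1 < r) (hM : 0 ≤ M) :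
    ∫ z in {z | jb (u z) ≤ M ∧ jb (v z) ≤ M}, jb (v z) ^ (-p) * jb (u z) ^ (-q)
      ≤ 2 ^ r * M ^ (2 * r - p - q) * (2 * (∫⁻ x, ENNReal.ofReal (jb x ^ (-r))).toReal ^ 2) := by
  obtain rfl : u = fun z => z.2 + β z.1 := funext hu
  obtain rfl : v = fun z => z.2 + γ z.1 := funext hv
  set C := ∫⁻ x, ENNReal.ofReal (jb x ^ (-r))
  set A := 2 ^ r * M ^ (2 * r - p - q)
  have hA : 0 ≤ A := by positivity
  set G : ℝ × ℝ → ℝ := fun z =>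
    jb (c + d * z.1) ^ (-r) * (jb (z.2 + β z.1) ^ (-r) + jb (z.2 + γ z.1) ^ (-r))
  have hpt : ∀ z ∈ {z : ℝ × ℝ | jb (z.2 + β z.1) ≤ M ∧ jb (z.2 + γ z.1) ≤ M},
      ENNReal.ofReal (jb (z.2 + γ z.1) ^ (-p) * jb (z.2 + β z.1) ^ (-q)) ≤
        ENNReal.ofReal A * ENNReal.ofReal (G z) := by
    rintro ⟨ξ, τ⟩ ⟨hu, hv⟩
    have key := jb_rpow_neg_mul_le hp hq hpr hqr hu hv
    rw [show τ + β ξ - (τ + γ ξ) = c + d * ξ by rw [← hβγ]; ring] at key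
    rw [← ENNReal.ofReal_mul hA]
    exact ENNReal.ofReal_le_ofReal key
  have hlin : ∫⁻ z in {z : ℝ × ℝ | jb (z.2 + β z.1) ≤ M ∧ jb (z.2 + γ z.1) ≤ M},
      ENNReal.ofReal (jb (z.2 + γ z.1) ^ (-p) * jb (z.2 + β z.1) ^ (-q))
      ≤ ENNReal.ofReal (A * (2 * C.toReal ^ 2)) := calc
    _ ≤ ∫⁻ z in {z : ℝ × ℝ | jb (z.2 + β z.1) ≤ M ∧ jb (z.2 + γ z.1) ≤ M},
        ENNReal.ofReal A * ENNReal.ofReal (G z) := setLIntegral_mono (by fun_prop) hpt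
    _ ≤ ∫⁻ z, ENNReal.ofReal A * ENNReal.ofReal (G z) := setLIntegral_le_lintegral _ _
    _ = ENNReal.ofReal A * ∫⁻ z, ENNReal.ofReal (G z) := lintegral_const_mul _ (by fun_prop)
    _ ≤ ENNReal.ofReal A * (2 * C ^ 2) :=
      mul_le_mul_right (lintegral_jb_rpow_neg_mul_add_le c hβ hγ (by linarith) hd) _
    _ = ENNReal.ofReal (A * (2 * C.toReal ^ 2)) := by
      rw [ENNReal.ofReal_mul hA, ENNReal.ofReal_mul zero_le_two, ENNReal.ofReal_pow
        ENNReal.toReal_nonneg, ENNReal.ofReal_toReal (lintegral_jb_rpow_neg_lt_top hr).ne,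
        ENNReal.ofReal_ofNat]
  rw [integral_eq_lintegral_of_nonneg_ae (ae_of_all _ fun z =>
    mul_nonneg (jb_rpow_nonneg _ _) (jb_rpow_nonneg _ _))
    (Measurable.aestronglyMeasurable (by fun_prop))]
  exact ENNReal.toReal_le_of_le_ofReal (by positivity) hlin

lemma rpow_neg_mul_rpow_half_le {M I K b e : ℝ} (hM : 1 ≤ M) (hI : 0 ≤ I) (hK : 0 ≤ K)
    (hIK : I ≤ K * M ^ e) (he : e ≤ 2 * b) : M ^ (-b) * I ^ (1 / 2 : ℝ) ≤ K ^ (1 / 2 : ℝ) := by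
  have hM0 : 0 < M := one_pos.trans_le hM
  calc M ^ (-b) * I ^ (1 / 2 : ℝ) ≤ M ^ (-b) * (K * M ^ e) ^ (1 / 2 : ℝ) := by gcongr
    _ = K ^ (1 / 2 : ℝ) * M ^ (e / 2 - b) := by
      rw [mul_rpow hK (rpow_nonneg hM0.le _), ← rpow_mul hM0.le, sub_eq_add_neg, rpow_add hM0]
      ring_nf
    _ ≤ K ^ (1 / 2 : ℝ) := by
      refine mul_le_of_le_one_right (by positivity) (rpow_le_one_of_one_le_of_nonpos hM ?_)
      linarith

/-- Region II estimate (for `|ξ₁| ≥ 1`) in the bilinear Schrödinger–KdV coupling estimate: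
for `a, b ∈ (1/4,1/2)` with `a + 2b > 1`, the sup over `(ξ₁,τ₁)` with `|ξ₁| ≥ 1` of
`⟨τ₁-ξ₁³⟩^{-b} (∫_{D(ξ₁,τ₁)} ⟨τ-τ₁+(ξ-ξ₁)²⟩^{-2b} ⟨τ+ξ²⟩^{-2a} dξ dτ)^{1/2}` is finite,
where `D(ξ₁,τ₁)` consists of `(ξ,τ)` with `⟨τ₁-ξ₁³⟩ ≥ ⟨τ+ξ²⟩` and
`⟨τ₁-ξ₁³⟩ ≥ ⟨τ-τ₁+(ξ-ξ₁)²⟩`. -/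
theorem stmt3 (a b : ℝ) (ha : a ∈ Set.Ioo (1/4 : ℝ) (1/2)) (hb : b ∈ Set.Ioo (1/4 : ℝ) (1/2))
    (hab : 1 < a + 2 * b) :
    ∃ C : ℝ, ∀ ξ₁ τ₁ : ℝ, 1 ≤ |ξ₁| →
      jb (τ₁ - ξ₁ ^ 3) ^ (-b) *
        (∫ q : ℝ × ℝ in {q : ℝ × ℝ |
            jb (q.2 + q.1 ^ 2) ≤ jb (τ₁ - ξ₁ ^ 3) ∧
            jb (q.2 - τ₁ + (q.1 - ξ₁) ^ 2) ≤ jb (τ₁ - ξ₁ ^ 3)},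
          jb (q.2 - τ₁ + (q.1 - ξ₁) ^ 2) ^ (-(2 * b)) * jb (q.2 + q.1 ^ 2) ^ (-(2 * a))) ^ (1/2 : ℝ)
        ≤ C := by
  obtain ⟨ha₀, ha₁⟩ := ha
  obtain ⟨hb₀, hb₁⟩ := hb
  set r := (1 + a + 2 * b) / 2 with hr
  have hr₁ : 1 < r := by linarith
  have hr₂ : r ≤ a + 2 * b := by linarith
  have h2a : 2 * a ≤ r := by linarith
  have h2b : 2 * b ≤ r := by linarith
  set K := 2 ^ r * (2 * (∫⁻ x, ENNReal.ofReal (jb x ^ (-r))).toReal ^ 2)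
  refine ⟨K ^ (1 / 2 : ℝ), fun ξ₁ τ₁ hξ₁ => rpow_neg_mul_rpow_half_le (one_le_jb _)
    (integral_nonneg fun q => mul_nonneg (jb_rpow_nonneg _ _) (jb_rpow_nonneg _ _)) (by positivity)
    ?_ (e := 2 * r - 2 * b - 2 * a) (by linarith)⟩
  have hI := setIntegral_jb_rpow_neg_mul_le (u := fun q => q.2 + q.1 ^ 2)
    (v := fun q => q.2 - τ₁ + (q.1 - ξ₁) ^ 2) (β := fun ξ => ξ ^ 2)
    (γ := fun ξ => (ξ - ξ₁) ^ 2 - τ₁) (c := τ₁ - ξ₁ ^ 2) (d := 2 * ξ₁) (M := jb (τ₁ - ξ₁ ^ 3))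
    (fun _ => rfl) (fun _ => by ring) (by fun_prop) (by fun_prop) (fun _ => by ring)
    (by rw [abs_mul, abs_two]; linarith) (by linarith : 0 ≤ 2 * b) (by linarith : 0 ≤ 2 * a)
    h2b h2a hr₁ (jb_pos _).le
  exact hI.trans_eq (mul_right_comm _ _ _)

end
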